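/- arXiv:1009.2142 — 5 statements merged into one kernel-verified Lean document; each statement's English description precedes it below -/
import Mathlib

section
/- For every strict total order ≺ on ℤ, the derived system S_≺ is a consistent digital line segments system, i.e., it satisfies axioms (S1)–(S5). -/
/-!
A north-east segment from `p` to `q` climbs at level `t` exactly when `t` is among the
`q.2 - p.2` greatest levels of `[p.1 + p.2, q.1 + q.2)` for `≺`, and these levels form an up-set
of exactly that size, so the staircase ends at `q`. An up-set of a strict total order is
determined by its size; so if `x` and `y` lie on the segment from `p` to `q`, the segment from `x`
to `y` climbs at the same levels as the segment from `p` to `q` does between them, and hence is a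
piece of it. This gives (S3), and (S4) by extending the segment one step past an end point.
Every digital segment is a north-east segment or its mirror image under `(x, y) ↦ (-x, y)`, and
axis-parallel segments are straight, which gives (S2) and (S5).
-/

/- `upAt prec p q t` : the level `t` is among the `q.2 - p.2` greatest elements
(w.r.t. the order `prec`) of the segment interval `[p.1+p.2, q.1+q.2-1]`. -/
open Classical in
noncomputable def upAt (prec : ℤ → ℤ → Prop) (p q : ℤ × ℤ) (t : ℤ) : Prop :=
  (((Finset.Ico (p.1 + p.2) (q.1 + q.2)).filter (fun u => u = t ∨ prec t u)).card : ℤ)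
    ≤ q.2 - p.2

/- The digital segment derived from `prec`, for `p.1 ≤ q.1` and `p.2 ≤ q.2`:
the monotone staircase from `p` to `q` that goes up at level `t` exactly when
`upAt prec p q t` holds. -/
open Classical in
noncomputable def digSegNE (prec : ℤ → ℤ → Prop) (p q : ℤ × ℤ) : Set (ℤ × ℤ) :=
  { r | p.1 + p.2 ≤ r.1 + r.2 ∧ r.1 + r.2 ≤ q.1 + q.2 ∧
    r.2 = p.2 + (((Finset.Ico (p.1 + p.2) (r.1 + r.2)).filter (fun t => upAt prec p q t)).card : ℤ) }

/- The digital segment for `p.1 ≤ q.1` (reflecting over the `y`-axis if `p.2 > q.2`). -/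
noncomputable def digSegAux (prec : ℤ → ℤ → Prop) (p q : ℤ × ℤ) : Set (ℤ × ℤ) :=
  if p.2 ≤ q.2 then digSegNE prec p q
  else (fun r : ℤ × ℤ => (-r.1, r.2)) '' digSegNE prec (-q.1, q.2) (-p.1, p.2)

/- The full system of digital segments `S_≺` derived from the order `prec`. -/
noncomputable def digSeg (prec : ℤ → ℤ → Prop) (p q : ℤ × ℤ) : Set (ℤ × ℤ) :=
  if p.1 ≤ q.1 then digSegAux prec p q else digSegAux prec q p

/- Adjacency in the grid graph on `ℤ²`. -/
def GridAdj (p q : ℤ × ℤ) : Prop :=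
  (|q.1 - p.1| = 1 ∧ q.2 = p.2) ∨ (q.1 = p.1 ∧ |q.2 - p.2| = 1)

/- `S` is the vertex set of a path from `p` to `q` in the grid graph on `ℤ²`. -/
def IsGridPath (p q : ℤ × ℤ) (S : Set (ℤ × ℤ)) : Prop :=
  ∃ n : ℕ, ∃ f : Fin (n + 1) → ℤ × ℤ, f 0 = p ∧ f (Fin.last n) = q ∧
    Function.Injective f ∧ (∀ i : Fin n, GridAdj (f i.castSucc) (f i.succ)) ∧
    Set.range f = S

/- A consistent digital line segments system (CDS): axioms (S1)-(S5). -/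
structure IsCDS (S : ℤ × ℤ → ℤ × ℤ → Set (ℤ × ℤ)) : Prop where
  path : ∀ p q, IsGridPath p q (S p q)                     -- (S1)
  symm : ∀ p q, S p q = S q p                               -- (S2)
  subseg : ∀ p q r, r ∈ S p q → S p r ⊆ S p q               -- (S3)
  prolong : ∀ p q, ∃ r, r ∉ S p q ∧ S p q ⊆ S p r           -- (S4)
  monoV : ∀ p q, p.1 = q.1 → ∀ r ∈ S p q, r.1 = p.1         -- (S5), vertical
  monoH : ∀ p q, p.2 = q.2 → ∀ r ∈ S p q, r.2 = p.2         -- (S5), horizontal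

/- The inclusion `ℤ² ⊆ ℝ²` (Euclidean plane). -/
noncomputable def toR2 (p : ℤ × ℤ) : EuclideanSpace ℝ (Fin 2) := WithLp.toLp 2 ![(p.1 : ℝ), (p.2 : ℝ)]

/- The 2-adic valuation of an integer, with `v2 0 = ⊤`. -/
noncomputable def v2 (k : ℤ) : ℕ∞ := if k = 0 then ⊤ else (padicValInt 2 k : ℕ∞)

/- The total order on `ℤ` defined via 2-adic valuations. -/
def vorder (a b : ℤ) : Prop :=
  ∃ i : ℕ, v2 (a - i) < v2 (b - i) ∧ ∀ j : ℕ, j < i → v2 (a - j) = v2 (b - j)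

open Finset

section GridPath

lemma isGridPath_image_Icc {f : ℤ → ℤ × ℤ} {a b : ℤ} (hf : Function.Injective f)
    (hab : a ≤ b) (hadj : ∀ s ∈ Set.Ico a b, GridAdj (f s) (f (s + 1))) :
    IsGridPath (f a) (f b) (f '' Set.Icc a b) := by
  refine ⟨(b - a).toNat, fun i => f (a + i), by simp, by simp [hab], ?_, fun i => ?_, ?_⟩
  · intro i j h
    exact Fin.ext (by exact_mod_cast add_left_cancel (hf h))
  · simpa [add_assoc] using hadj (a + i) ⟨by omega, by omega⟩
  · ext z
    constructor
    · rintro ⟨i, rfl⟩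
      exact ⟨a + i, ⟨by omega, by omega⟩, rfl⟩
    · rintro ⟨s, ⟨hs₁, hs₂⟩, rfl⟩
      exact ⟨⟨(s - a).toNat, by omega⟩, by simp [hs₁]⟩

lemma GridAdj.symm {x y : ℤ × ℤ} (h : GridAdj x y) : GridAdj y x := by
  unfold GridAdj at *
  rw [abs_sub_comm x.1, abs_sub_comm x.2, eq_comm (a := x.1), eq_comm (a := x.2)]
  exact h

lemma IsGridPath.symm {p q : ℤ × ℤ} {S : Set (ℤ × ℤ)} (h : IsGridPath p q S) :
    IsGridPath q p S := by
  obtain ⟨n, f, h0, hn, hinj, hadj, rfl⟩ := h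
  refine ⟨n, f ∘ Fin.rev, by simpa, by simpa, hinj.comp Fin.rev_injective, fun i => ?_,
    Fin.rev_surjective.range_comp f⟩
  simpa [Fin.rev_castSucc, Fin.rev_succ] using (hadj i.rev).symm

lemma IsGridPath.image {p q : ℤ × ℤ} {S : Set (ℤ × ℤ)} {e : ℤ × ℤ → ℤ × ℤ}
    (h : IsGridPath p q S) (he : Function.Injective e)
    (hadj : ∀ x y, GridAdj x y → GridAdj (e x) (e y)) :
    IsGridPath (e p) (e q) (e '' S) := by
  obtain ⟨n, f, h0, hn, hinj, hadjf, rfl⟩ := h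
  exact ⟨n, e ∘ f, by simp [h0], by simp [hn], he.comp hinj, fun i => hadj _ _ (hadjf i),
    Set.range_comp e f⟩

end GridPath

section StrictTotalOrder

variable {α : Type*}

open Classical in
noncomputable def countAtLeast (r : α → α → Prop) (F : Finset α) (t : α) : ℕ :=
  #{u ∈ F | u = t ∨ r t u}

variable {r : α → α → Prop} {F : Finset α} {t u : α}

open Classical in
lemma filter_atLeast_subset_of_rel [IsTrans α r] (h : r t u) :
    {v ∈ F | v = u ∨ r u v} ⊆ {v ∈ F | v = t ∨ r t v} := by
  intro v hv
  simp only [mem_filter] at hv ⊢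
  rcases hv with ⟨hv, rfl | huv⟩
  exacts [⟨hv, .inr h⟩, ⟨hv, .inr (_root_.trans h huv)⟩]

lemma countAtLeast_le_of_rel [IsTrans α r] (h : r t u) :
    countAtLeast r F u ≤ countAtLeast r F t :=
  card_le_card (filter_atLeast_subset_of_rel h)

lemma countAtLeast_lt_of_rel [IsStrictOrder α r] (ht : t ∈ F) (h : r t u) :
    countAtLeast r F u < countAtLeast r F t := by
  classical
  refine card_lt_card ((ssubset_iff_of_subset (filter_atLeast_subset_of_rel h)).2
    ⟨t, mem_filter.2 ⟨ht, .inl rfl⟩, fun hmem => ?_⟩)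
  rcases (mem_filter.1 hmem).2 with rfl | hut
  exacts [irrefl t h, asymm h hut]

lemma iff_of_upwardClosed_of_card_filter_eq [Std.Trichotomous r] {P Q : α → Prop}
    [DecidablePred P] [DecidablePred Q] (hP : ∀ t u, P t → r t u → P u)
    (hQ : ∀ t u, Q t → r t u → Q u)
    (hcard : #{t ∈ F | P t} = #{t ∈ F | Q t}) (ht : t ∈ F) : P t ↔ Q t := by
  have hnested : {t ∈ F | P t} ⊆ {t ∈ F | Q t} ∨ {t ∈ F | Q t} ⊆ {t ∈ F | P t} := by
    by_contra! hc
    obtain ⟨x, hx, hxQ⟩ := not_subset.1 hc.1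
    obtain ⟨y, hy, hyP⟩ := not_subset.1 hc.2
    rw [mem_filter] at hx hy hxQ hyP
    rcases trichotomous_of r x y with h | rfl | h
    · exact hyP ⟨hy.1, hP x y hx.2 h⟩
    · exact hxQ ⟨hx.1, hy.2⟩
    · exact hxQ ⟨hx.1, hQ y x hy.2 h⟩
  have heq : {t ∈ F | P t} = {t ∈ F | Q t} := by
    rcases hnested with h | h
    · exact eq_of_subset_of_card_le h hcard.ge
    · exact (eq_of_subset_of_card_le h hcard.le).symm
  exact filter_inj'.1 heq ht

variable [IsStrictTotalOrder α r]

lemma countAtLeast_injOn : Set.InjOn (countAtLeast r F) F := by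
  intro t ht u hu htu
  rcases trichotomous_of r t u with h | h | h
  · exact absurd htu (countAtLeast_lt_of_rel ht h).ne'
  · exact h
  · exact absurd htu (countAtLeast_lt_of_rel hu h).ne

lemma image_countAtLeast : F.image (countAtLeast r F) = Icc 1 #F := by
  classical
  refine eq_of_subset_of_card_le (fun j hj => ?_) ?_
  · obtain ⟨t, ht, rfl⟩ := mem_image.1 hj
    exact mem_Icc.2 ⟨card_pos.2 ⟨t, mem_filter.2 ⟨ht, Or.inl rfl⟩⟩, card_filter_le _ _⟩
  · rw [card_image_of_injOn countAtLeast_injOn, Nat.card_Icc, Nat.add_sub_cancel]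

lemma card_filter_countAtLeast_le {k : ℕ} (hk : k ≤ #F) :
    #{t ∈ F | countAtLeast r F t ≤ k} = k := by
  classical
  rw [← card_image_of_injOn ((countAtLeast_injOn (r := r)).mono (filter_subset _ _)),
    ← filter_image (p := (· ≤ k)), image_countAtLeast]
  have : {j ∈ Icc 1 #F | j ≤ k} = Icc 1 k := by
    ext j
    simp only [mem_filter, mem_Icc]
    omega
  rw [this, Nat.card_Icc, Nat.add_sub_cancel]

end StrictTotalOrder

section DigSegNE

open Classical

variable {prec : ℤ → ℤ → Prop} {p q x y : ℤ × ℤ} {s s' t : ℤ}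

lemma upAt_iff_countAtLeast :
    upAt prec p q t ↔
      (countAtLeast prec (Ico (p.1 + p.2) (q.1 + q.2)) t : ℤ) ≤ q.2 - p.2 := by
  unfold upAt countAtLeast
  convert Iff.rfl

lemma upAt_of_rel [IsTrans ℤ prec] {u : ℤ} (h : upAt prec p q t) (htu : prec t u) :
    upAt prec p q u := by
  rw [upAt_iff_countAtLeast] at h ⊢
  exact le_trans (by exact_mod_cast countAtLeast_le_of_rel htu) h

lemma upAt_of_upAt_of_sub_le {p' q' : ℤ × ℤ} (hp : p'.1 + p'.2 = p.1 + p.2)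
    (hq : q'.1 + q'.2 = q.1 + q.2) (hk : q.2 - p.2 ≤ q'.2 - p'.2) (h : upAt prec p q t) :
    upAt prec p' q' t := by
  rw [upAt_iff_countAtLeast, hp, hq] at *
  exact h.trans hk

variable (prec) in
noncomputable def segHeight (p q : ℤ × ℤ) (s : ℤ) : ℤ :=
  p.2 + #{t ∈ Ico (p.1 + p.2) s | upAt prec p q t}

lemma mem_digSegNE :
    x ∈ digSegNE prec p q ↔ p.1 + p.2 ≤ x.1 + x.2 ∧ x.1 + x.2 ≤ q.1 + q.2 ∧
      x.2 = segHeight prec p q (x.1 + x.2) :=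
  Iff.rfl

lemma segHeight_add (h₁ : p.1 + p.2 ≤ s) (h₂ : s ≤ s') :
    segHeight prec p q s' = segHeight prec p q s + #{t ∈ Ico s s' | upAt prec p q t} := by
  rw [segHeight, segHeight, ← Ico_union_Ico_eq_Ico h₁ h₂, filter_union,
    card_union_of_disjoint (disjoint_filter_filter (Ico_disjoint_Ico_consecutive _ _ _))]
  push_cast
  ring

lemma segHeight_start : segHeight prec p q (p.1 + p.2) = p.2 := by
  simp [segHeight]

lemma segHeight_succ (h : p.1 + p.2 ≤ s) :
    segHeight prec p q (s + 1) = segHeight prec p q s + if upAt prec p q s then 1 else 0 := by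
  rw [segHeight_add h (Int.le_add_one le_rfl), Ico_add_one_right_eq_Icc, Icc_self,
    filter_singleton]
  split_ifs <;> simp

lemma segHeight_sub_mem_Icc (h₁ : p.1 + p.2 ≤ s) (h₂ : s ≤ s') :
    segHeight prec p q s' - segHeight prec p q s ∈ Set.Icc 0 (s' - s) := by
  have hle := card_filter_le (Ico s s') fun t => upAt prec p q t
  rw [Int.card_Ico] at hle
  rw [segHeight_add h₁ h₂]
  constructor <;> omega

lemma le_of_mem_digSegNE (hx : x ∈ digSegNE prec p q) (hy : y ∈ digSegNE prec p q)
    (h : x.1 + x.2 ≤ y.1 + y.2) : x ≤ y := by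
  obtain ⟨hx₁, -, hx₃⟩ := mem_digSegNE.1 hx
  obtain ⟨-, -, hy₃⟩ := mem_digSegNE.1 hy
  have := segHeight_sub_mem_Icc (prec := prec) (q := q) hx₁ h
  rw [Set.mem_Icc, ← hx₃, ← hy₃] at this
  exact Prod.le_def.2 ⟨by omega, by omega⟩

lemma start_mem_digSegNE (h : p ≤ q) : p ∈ digSegNE prec p q :=
  ⟨le_rfl, by have := Prod.le_def.1 h; omega, segHeight_start.symm⟩

variable (prec) in
noncomputable def segPoint (p q : ℤ × ℤ) (s : ℤ) : ℤ × ℤ :=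
  (s - segHeight prec p q s, segHeight prec p q s)

lemma segPoint_injective : Function.Injective (segPoint prec p q) := fun s s' h => by
  simpa [segPoint] using congrArg (fun z : ℤ × ℤ => z.1 + z.2) h

lemma digSegNE_eq_image :
    digSegNE prec p q = segPoint prec p q '' Set.Icc (p.1 + p.2) (q.1 + q.2) := by
  ext x
  constructor
  · intro hx
    obtain ⟨hx₁, hx₂, hx₃⟩ := mem_digSegNE.1 hx
    exact ⟨x.1 + x.2, ⟨hx₁, hx₂⟩,
      Prod.ext (by simp only [segPoint]; omega) (by simp only [segPoint]; omega)⟩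
  · rintro ⟨s, ⟨hs₁, hs₂⟩, rfl⟩
    refine mem_digSegNE.2 ⟨?_, ?_, ?_⟩ <;> simp [segPoint, hs₁, hs₂]

lemma gridAdj_segPoint (h : p.1 + p.2 ≤ s) :
    GridAdj (segPoint prec p q s) (segPoint prec p q (s + 1)) := by
  have hstep := segHeight_succ (prec := prec) (q := q) h
  unfold GridAdj segPoint
  split_ifs at hstep
  · right
    constructor <;> simp [hstep]
  · left
    constructor <;> simp [hstep]

variable [IsStrictTotalOrder ℤ prec]

lemma card_filter_upAt (h : p ≤ q) :
    (#{t ∈ Ico (p.1 + p.2) (q.1 + q.2) | upAt prec p q t} : ℤ) = q.2 - p.2 := by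
  obtain ⟨h₁, h₂⟩ := Prod.le_def.1 h
  have hk : (q.2 - p.2).toNat ≤ #(Ico (p.1 + p.2) (q.1 + q.2)) := by
    rw [Int.card_Ico]
    omega
  have hfilter : {t ∈ Ico (p.1 + p.2) (q.1 + q.2) | upAt prec p q t} =
      {t ∈ Ico (p.1 + p.2) (q.1 + q.2) |
        countAtLeast prec (Ico (p.1 + p.2) (q.1 + q.2)) t ≤ (q.2 - p.2).toNat} :=
    filter_congr fun t _ => by rw [upAt_iff_countAtLeast, Int.le_toNat (by omega)]
  rw [hfilter, card_filter_countAtLeast_le hk]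
  omega

lemma segHeight_end (h : p ≤ q) :
    segHeight prec p q (q.1 + q.2) = q.2 := by
  rw [segHeight, card_filter_upAt h]
  ring

lemma end_mem_digSegNE (h : p ≤ q) : q ∈ digSegNE prec p q :=
  ⟨by have := Prod.le_def.1 h; omega, le_rfl, (segHeight_end h).symm⟩

lemma digSegNE_subset_Icc (h : p ≤ q) :
    digSegNE prec p q ⊆ Set.Icc p q := by
  intro x hx
  obtain ⟨hx₁, hx₂, -⟩ := mem_digSegNE.1 hx
  exact ⟨le_of_mem_digSegNE (start_mem_digSegNE h) hx hx₁,
    le_of_mem_digSegNE hx (end_mem_digSegNE h) hx₂⟩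

lemma isGridPath_digSegNE (h : p ≤ q) : IsGridPath p q (digSegNE prec p q) := by
  obtain ⟨h₁, h₂⟩ := Prod.le_def.1 h
  have hp : segPoint prec p q (p.1 + p.2) = p := by
    simp only [segPoint, segHeight_start, add_sub_cancel_right]
  have hq : segPoint prec p q (q.1 + q.2) = q := by
    simp only [segPoint, segHeight_end h, add_sub_cancel_right]
  rw [digSegNE_eq_image]
  have hab : p.1 + p.2 ≤ q.1 + q.2 := by omega
  convert isGridPath_image_Icc segPoint_injective hab fun s hs => gridAdj_segPoint hs.1
  exacts [hp.symm, hq.symm]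

lemma digSegNE_eq_Icc (h : p ≤ q) (hd : p.1 = q.1 ∨ p.2 = q.2) :
    digSegNE prec p q = Set.Icc p q := by
  refine (digSegNE_subset_Icc h).antisymm fun x ⟨hpx, hxq⟩ => ?_
  have hmem : segPoint prec p q (x.1 + x.2) ∈ digSegNE prec p q := by
    rw [digSegNE_eq_image]
    exact Set.mem_image_of_mem _ ⟨by have := Prod.le_def.1 hpx; omega,
      by have := Prod.le_def.1 hxq; omega⟩
  obtain ⟨hp, hq⟩ := digSegNE_subset_Icc h hmem
  rw [Prod.le_def] at hpx hxq hp hq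
  simp only [segPoint] at hp hq hmem
  convert hmem using 1
  ext <;> simp only <;> omega

lemma upAt_iff_of_mem_digSegNE (hx : x ∈ digSegNE prec p q) (hy : y ∈ digSegNE prec p q)
    (hxy : x ≤ y) (ht : t ∈ Ico (x.1 + x.2) (y.1 + y.2)) :
    upAt prec x y t ↔ upAt prec p q t := by
  refine iff_of_upwardClosed_of_card_filter_eq (fun _ _ => upAt_of_rel)
    (fun _ _ => upAt_of_rel) ?_ ht
  obtain ⟨hx₁, -, hx₃⟩ := mem_digSegNE.1 hx
  obtain ⟨-, -, hy₃⟩ := mem_digSegNE.1 hy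
  obtain ⟨h₁, h₂⟩ := Prod.le_def.1 hxy
  have hcount := card_filter_upAt (prec := prec) hxy
  have hpq := segHeight_add (prec := prec) (q := q) (s' := y.1 + y.2) hx₁ (by omega)
  rw [← hx₃, ← hy₃] at hpq
  omega

lemma digSegNE_subset_of_mem (hx : x ∈ digSegNE prec p q) (hy : y ∈ digSegNE prec p q) :
    digSegNE prec x y ⊆ digSegNE prec p q := by
  intro z hz
  obtain ⟨hz₁, hz₂, hz₃⟩ := mem_digSegNE.1 hz
  obtain ⟨hx₁, -, hx₃⟩ := mem_digSegNE.1 hx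
  obtain ⟨-, hy₂, -⟩ := mem_digSegNE.1 hy
  have hxy := le_of_mem_digSegNE hx hy (hz₁.trans hz₂)
  have hcongr : {t ∈ Ico (x.1 + x.2) (z.1 + z.2) | upAt prec x y t} =
      {t ∈ Ico (x.1 + x.2) (z.1 + z.2) | upAt prec p q t} :=
    filter_congr fun t ht => upAt_iff_of_mem_digSegNE hx hy hxy (Ico_subset_Ico_right hz₂ ht)
  refine mem_digSegNE.2 ⟨hx₁.trans hz₁, hz₂.trans hy₂, ?_⟩
  refine hz₃.trans ?_
  rw [segHeight_add hx₁ hz₁, ← hx₃, segHeight, hcongr]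

lemma exists_superset_digSegNE_end (h : p ≤ q) :
    ∃ r, p ≤ r ∧ r ∉ digSegNE prec p q ∧ digSegNE prec p q ⊆ digSegNE prec p r := by
  obtain ⟨h₁, h₂⟩ := Prod.le_def.1 h
  obtain ⟨r, hqr, hr, hup⟩ : ∃ r : ℤ × ℤ, q ≤ r ∧ r.1 + r.2 = q.1 + q.2 + 1 ∧
      (upAt prec p r (q.1 + q.2) ↔ r.2 = q.2 + 1) := by
    -- If level `q.1 + q.2` does not climb towards `(q.1, q.2 + 1)`, it does not climb towards
    -- `(q.1 + 1, q.2)` either, which has one climb fewer to distribute.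
    by_cases hup : upAt prec p (q.1, q.2 + 1) (q.1 + q.2)
    · exact ⟨(q.1, q.2 + 1), Prod.le_def.2 ⟨le_rfl, by omega⟩, by simp; ring,
        by simpa using hup⟩
    · refine ⟨(q.1 + 1, q.2), Prod.le_def.2 ⟨by omega, le_rfl⟩, by simp; ring, ?_⟩
      have hright : ¬upAt prec p (q.1 + 1, q.2) (q.1 + q.2) := fun h' =>
        hup (upAt_of_upAt_of_sub_le rfl (by simp; ring) (by simp) h')
      simpa using hright
  have hpr := h.trans hqr
  have hq : q ∈ digSegNE prec p r := by
    refine mem_digSegNE.2 ⟨by omega, by omega, ?_⟩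
    have hstep := segHeight_succ (prec := prec) (p := p) (q := r) (s := q.1 + q.2) (by omega)
    rw [← hr, segHeight_end hpr] at hstep
    obtain ⟨hq₁, hq₂⟩ := Prod.le_def.1 hqr
    split_ifs at hstep with hs
    · have := hup.1 hs
      omega
    · have := mt hup.2 hs
      omega
  refine ⟨r, hpr, fun hr' => ?_, digSegNE_subset_of_mem (start_mem_digSegNE hpr) hq⟩
  have := (mem_digSegNE.1 hr').2.1
  omega

lemma exists_superset_digSegNE_start (h : p ≤ q) :
    ∃ r, r ≤ q ∧ r ∉ digSegNE prec p q ∧ digSegNE prec p q ⊆ digSegNE prec r q := by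
  obtain ⟨h₁, h₂⟩ := Prod.le_def.1 h
  obtain ⟨r, hrp, hr, hup⟩ : ∃ r : ℤ × ℤ, r ≤ p ∧ r.1 + r.2 = p.1 + p.2 - 1 ∧
      (upAt prec r q (p.1 + p.2 - 1) ↔ p.2 = r.2 + 1) := by
    by_cases hup : upAt prec (p.1, p.2 - 1) q (p.1 + p.2 - 1)
    · exact ⟨(p.1, p.2 - 1), Prod.le_def.2 ⟨le_rfl, by simp⟩, by simp; ring,
        by simpa using hup⟩
    · refine ⟨(p.1 - 1, p.2), Prod.le_def.2 ⟨by simp, le_rfl⟩, by simp; ring, ?_⟩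
      have hleft : ¬upAt prec (p.1 - 1, p.2) q (p.1 + p.2 - 1) := fun h' =>
        hup (upAt_of_upAt_of_sub_le (by simp; ring) rfl (by dsimp only; omega) h')
      simpa using hleft
  have hrq := hrp.trans h
  obtain ⟨hp₁, hp₂⟩ := Prod.le_def.1 hrp
  have hp : p ∈ digSegNE prec r q := by
    refine mem_digSegNE.2 ⟨by omega, by omega, ?_⟩
    have hstep := segHeight_succ (prec := prec) (p := r) (q := q) (s := r.1 + r.2) le_rfl
    rw [segHeight_start, hr, sub_add_cancel] at hstep
    split_ifs at hstep with hs
    · have := hup.1 (hr ▸ hs)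
      omega
    · have := mt hup.2 (hr ▸ hs)
      omega
  refine ⟨r, hrq, fun hr' => ?_, digSegNE_subset_of_mem hp (end_mem_digSegNE hrq)⟩
  have := (mem_digSegNE.1 hr').1
  omega

end DigSegNE

def flipX : Bool → ℤ × ℤ → ℤ × ℤ
  | false, r => r
  | true, r => (-r.1, r.2)

lemma flipX_involutive (b : Bool) : Function.Involutive (flipX b) := by
  cases b <;> intro r <;> simp [flipX]

lemma gridAdj_flipX (b : Bool) {x y : ℤ × ℤ} (h : GridAdj x y) :
    GridAdj (flipX b x) (flipX b y) := by
  cases b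
  · exact h
  · unfold GridAdj flipX
    rw [neg_sub_neg, abs_sub_comm, neg_inj]
    exact h

lemma flipX_image_Icc {b : Bool} {p q : ℤ × ℤ} (h : flipX b p ≤ flipX b q) :
    flipX b '' Set.Icc (flipX b p) (flipX b q) = Set.uIcc p q := by
  rw [(flipX_involutive b).image_eq_preimage_symm]
  ext z
  rw [Prod.le_def] at h
  cases b <;>
  · simp only [flipX, Set.mem_preimage, Set.mem_Icc, Prod.le_def, Set.uIcc_prod_eq,
      Set.mem_prod, Set.mem_uIcc] at h ⊢
    omega

section DigSeg

variable {prec : ℤ → ℤ → Prop} [IsStrictTotalOrder ℤ prec] {b : Bool} {p q r : ℤ × ℤ}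

lemma digSegAux_of_degenerate (h : p.1 ≤ q.1) (hd : p.1 = q.1 ∨ p.2 = q.2) :
    digSegAux prec p q = Set.uIcc p q := by
  unfold digSegAux
  split_ifs with h₂
  · have hle : p ≤ q := Prod.le_def.2 ⟨h, h₂⟩
    rw [digSegNE_eq_Icc hle hd, Set.uIcc_of_le hle]
  · have hle : flipX true q ≤ flipX true p :=
      Prod.le_def.2 ⟨neg_le_neg h, (not_le.1 h₂).le⟩
    change flipX true '' digSegNE prec (flipX true q) (flipX true p) = _
    rw [digSegNE_eq_Icc hle (by simpa [flipX, eq_comm] using hd), flipX_image_Icc hle,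
      Set.uIcc_comm]

lemma digSeg_of_degenerate (hd : p.1 = q.1 ∨ p.2 = q.2) : digSeg prec p q = Set.uIcc p q := by
  unfold digSeg
  split_ifs with h
  · exact digSegAux_of_degenerate h hd
  · rw [digSegAux_of_degenerate (not_le.1 h).le (by tauto), Set.uIcc_comm]

lemma digSeg_symm (p q : ℤ × ℤ) : digSeg prec p q = digSeg prec q p := by
  by_cases hd : p.1 = q.1 ∨ p.2 = q.2
  · rw [digSeg_of_degenerate hd, digSeg_of_degenerate (by tauto), Set.uIcc_comm]
  · unfold digSeg
    split_ifs <;> first | rfl | omega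

lemma digSeg_eq_preimage (h : flipX b p ≤ flipX b q) :
    digSeg prec p q = flipX b ⁻¹' digSegNE prec (flipX b p) (flipX b q) := by
  rw [← (flipX_involutive b).image_eq_preimage_symm]
  by_cases hd : p.1 = q.1 ∨ p.2 = q.2
  · rw [digSeg_of_degenerate hd, digSegNE_eq_Icc h ?_, flipX_image_Icc h]
    cases b <;> simpa [flipX] using hd
  · rw [Prod.le_def] at h
    unfold digSeg digSegAux
    cases b <;> simp only [flipX, neg_le_neg_iff] at h
    · rw [if_pos h.1, if_pos h.2]
      exact (Set.image_id' _).symm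
    · rw [if_neg (by omega), if_neg (by omega)]
      rfl

lemma digSeg_eq_preimage_swap (h : flipX b q ≤ flipX b p) :
    digSeg prec p q = flipX b ⁻¹' digSegNE prec (flipX b q) (flipX b p) := by
  rw [digSeg_symm, digSeg_eq_preimage h]

lemma exists_flipX_le (p q : ℤ × ℤ) :
    ∃ b, flipX b p ≤ flipX b q ∨ flipX b q ≤ flipX b p := by
  simp only [Prod.le_def]
  rcases le_total p.1 q.1 with h₁ | h₁ <;> rcases le_total p.2 q.2 with h₂ | h₂
  · exact ⟨false, .inl ⟨h₁, h₂⟩⟩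
  · exact ⟨true, .inr ⟨neg_le_neg h₁, h₂⟩⟩
  · exact ⟨true, .inl ⟨neg_le_neg h₁, h₂⟩⟩
  · exact ⟨false, .inr ⟨h₁, h₂⟩⟩

lemma isGridPath_preimage_digSegNE (h : p ≤ q) :
    IsGridPath (flipX b p) (flipX b q) (flipX b ⁻¹' digSegNE prec p q) := by
  rw [← (flipX_involutive b).image_eq_preimage_symm]
  exact (isGridPath_digSegNE h).image (flipX_involutive b).injective fun _ _ => gridAdj_flipX b

lemma isGridPath_digSeg (p q : ℤ × ℤ) : IsGridPath p q (digSeg prec p q) := by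
  obtain ⟨b, h | h⟩ := exists_flipX_le p q
  all_goals have hinv := flipX_involutive b
  · simpa only [digSeg_eq_preimage h, hinv p, hinv q] using
      isGridPath_preimage_digSegNE (prec := prec) (b := b) h
  · simpa only [digSeg_eq_preimage_swap h, hinv p, hinv q] using
      (isGridPath_preimage_digSegNE (prec := prec) (b := b) h).symm

lemma digSeg_subset_of_mem (hr : r ∈ digSeg prec p q) : digSeg prec p r ⊆ digSeg prec p q := by
  obtain ⟨b, h | h⟩ := exists_flipX_le p q
  · rw [digSeg_eq_preimage h] at hr ⊢
    rw [digSeg_eq_preimage (digSegNE_subset_Icc h hr).1]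
    exact Set.preimage_mono (digSegNE_subset_of_mem (start_mem_digSegNE h) hr)
  · rw [digSeg_eq_preimage_swap h] at hr ⊢
    rw [digSeg_eq_preimage_swap (digSegNE_subset_Icc h hr).2]
    exact Set.preimage_mono (digSegNE_subset_of_mem hr (end_mem_digSegNE h))

lemma exists_superset_digSeg (p q : ℤ × ℤ) :
    ∃ r, r ∉ digSeg prec p q ∧ digSeg prec p q ⊆ digSeg prec p r := by
  obtain ⟨b, h | h⟩ := exists_flipX_le p q
  all_goals have hinv := flipX_involutive b
  · obtain ⟨r, hr, hrq, hsub⟩ := exists_superset_digSegNE_end (prec := prec) h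
    rw [← hinv r] at hr hrq hsub
    refine ⟨flipX b r, ?_⟩
    rw [digSeg_eq_preimage h, digSeg_eq_preimage hr]
    exact ⟨hrq, Set.preimage_mono hsub⟩
  · obtain ⟨r, hr, hrq, hsub⟩ := exists_superset_digSegNE_start (prec := prec) h
    rw [← hinv r] at hr hrq hsub
    refine ⟨flipX b r, ?_⟩
    rw [digSeg_eq_preimage_swap h, digSeg_eq_preimage_swap hr]
    exact ⟨hrq, Set.preimage_mono hsub⟩

end DigSeg

theorem digSeg_isCDS (prec : ℤ → ℤ → Prop) [IsStrictTotalOrder ℤ prec] :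
    IsCDS (digSeg prec) := by
  refine ⟨isGridPath_digSeg, digSeg_symm, fun _ _ _ => digSeg_subset_of_mem,
    exists_superset_digSeg, fun p q h r hr => ?_, fun p q h r hr => ?_⟩
  · rw [digSeg_of_degenerate (.inl h), Set.uIcc_prod_eq, h, Set.uIcc_self] at hr
    exact (Set.mem_singleton_iff.1 hr.1).trans h.symm
  · rw [digSeg_of_degenerate (.inr h), Set.uIcc_prod_eq, h, Set.uIcc_self] at hr
    exact (Set.mem_singleton_iff.1 hr.2).trans h.symm
end

section
/- Let p,q,r,r' ∈ ℤ² satisfy p_x ≤ r_x ≤ q_x, p_y ≤ r_y < q_y, r' = (r_x, r_y+1), and suppose r_x − p_x = q_x − r'_x + ε and r_y − p_y = q_y − r'_y − ε for some ε ∈ {−1,0,1}. Then H(\overline{pq}, \overline{pr} ∪ \overline{rr'} ∪ \overline{r'q}) ≤ √5/2. -/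
/-! The hypotheses say that `2r - p - q = (ε, -1 - ε)` and `2r' - p - q = (ε, 1 - ε)`, vectors of
squared length at most 5, so `r` and `r'` lie within `√5/2` of the midpoint `m` of `pq`. Splitting
`pq` at `m`, the homothety with centre `p` (resp. `q`) matches `pm` with `pr` (resp. `qm` with `qr'`)
pointwise up to `dist m r` (resp. `dist m r'`), and the middle edge `rr'` stays in the closed ball of
radius `√5/2` about `m` by convexity. -/

open AffineMap

section Segments

variable {E : Type*} [NormedAddCommGroup E] [NormedSpace ℝ E]

theorem segment_subset_segment_midpoint_union (x y : E) :
    segment ℝ x y ⊆ segment ℝ x (midpoint ℝ x y) ∪ segment ℝ y (midpoint ℝ x y) := by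
  rw [segment_eq_image_lineMap]
  rintro _ ⟨t, ⟨ht0, ht1⟩, rfl⟩
  rcases le_total t (1 / 2) with ht | ht
  · left
    have : lineMap x y t = lineMap x (midpoint ℝ x y) (2 * t) := by
      rw [midpoint, lineMap_lineMap_right]; congr 1; norm_num; ring
    exact this ▸ lineMap_mem_segment ℝ _ _ ⟨by linarith, by linarith⟩
  · right
    have : lineMap x y t = lineMap y (midpoint ℝ x y) (2 * (1 - t)) := by
      rw [midpoint_comm, midpoint, lineMap_lineMap_right, ← lineMap_apply_one_sub]
      congr 1; norm_num; ring
    exact this ▸ lineMap_mem_segment ℝ _ _ ⟨by linarith, by linarith⟩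

theorem exists_mem_segment_dist_le (a b c : E) {x : E} (hx : x ∈ segment ℝ a b) :
    ∃ y ∈ segment ℝ a c, dist x y ≤ dist b c := by
  rw [segment_eq_image_lineMap] at hx
  obtain ⟨t, ⟨ht0, ht1⟩, rfl⟩ := hx
  refine ⟨lineMap a c t, lineMap_mem_segment ℝ a c ⟨ht0, ht1⟩, ?_⟩
  have : dist (lineMap a b t) (lineMap a c t) = t * dist b c := by
    rw [dist_eq_norm_vsub, lineMap_vsub_lineMap]
    simp [lineMap_apply_module, norm_smul, abs_of_nonneg ht0, dist_eq_norm]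
  rw [this]
  exact mul_le_of_le_one_left dist_nonneg ht1

theorem hausdorffDist_segment_polyline_le_of_dist_midpoint_le (P Q R R' : E) {c : ℝ}
    (hR : dist R (midpoint ℝ P Q) ≤ c) (hR' : dist R' (midpoint ℝ P Q) ≤ c) :
    Metric.hausdorffDist (segment ℝ P Q)
      (segment ℝ P R ∪ segment ℝ R R' ∪ segment ℝ R' Q) ≤ c := by
  set M := midpoint ℝ P Q
  have hPM : segment ℝ P M ⊆ segment ℝ P Q :=
    (convex_segment P Q).segment_subset (left_mem_segment ℝ P Q) (midpoint_mem_segment P Q)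
  have hQM : segment ℝ Q M ⊆ segment ℝ P Q :=
    (convex_segment P Q).segment_subset (right_mem_segment ℝ P Q) (midpoint_mem_segment P Q)
  have hRR' : segment ℝ R R' ⊆ Metric.closedBall M c :=
    (convex_closedBall M c).segment_subset hR hR'
  refine Metric.hausdorffDist_le_of_mem_dist (dist_nonneg.trans hR) ?_ ?_
  · intro x hx
    rcases segment_subset_segment_midpoint_union P Q hx with hx | hx
    · obtain ⟨y, hy, hxy⟩ := exists_mem_segment_dist_le P M R hx
      exact ⟨y, Or.inl (Or.inl hy), hxy.trans (dist_comm M R ▸ hR)⟩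
    · obtain ⟨y, hy, hxy⟩ := exists_mem_segment_dist_le Q M R' hx
      exact ⟨y, Or.inr (segment_symm ℝ Q R' ▸ hy), hxy.trans (dist_comm M R' ▸ hR')⟩
  · rintro y ((hy | hy) | hy)
    · obtain ⟨x, hx, hxy⟩ := exists_mem_segment_dist_le P R M hy
      exact ⟨x, hPM hx, hxy.trans hR⟩
    · exact ⟨M, midpoint_mem_segment P Q, hRR' hy⟩
    · obtain ⟨x, hx, hxy⟩ := exists_mem_segment_dist_le Q R' M (segment_symm ℝ R' Q ▸ hy)
      exact ⟨x, hQM hx, hxy.trans hR'⟩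

end Segments

theorem dist_toR2_midpoint (p q r : ℤ × ℤ) :
    dist (toR2 r) (midpoint ℝ (toR2 p) (toR2 q)) =
      √(((2 * r.1 - p.1 - q.1) ^ 2 + (2 * r.2 - p.2 - q.2) ^ 2 : ℤ) : ℝ) / 2 := by
  rw [EuclideanSpace.dist_eq, Fin.sum_univ_two, midpoint_eq_smul_add]
  simp only [toR2, PiLp.smul_apply, PiLp.add_apply, Real.dist_eq, sq_abs, smul_eq_mul, invOf_eq_inv,
    Matrix.cons_val_zero, Matrix.cons_val_one]
  rw [eq_div_iff two_ne_zero, ← Real.sqrt_sq zero_le_two, ← Real.sqrt_mul (by positivity)]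
  congr 1
  push_cast
  ring

theorem dist_toR2_midpoint_le (p q r : ℤ × ℤ)
    (h : (2 * r.1 - p.1 - q.1) ^ 2 + (2 * r.2 - p.2 - q.2) ^ 2 ≤ 5) :
    dist (toR2 r) (midpoint ℝ (toR2 p) (toR2 q)) ≤ √5 / 2 := by
  rw [dist_toR2_midpoint]
  gcongr
  exact_mod_cast h

theorem hausdorff_midpoint_split_general (p q r r' : ℤ × ℤ) (ε : ℤ)
    (hε : ε = -1 ∨ ε = 0 ∨ ε = 1)
    (hr' : r' = (r.1, r.2 + 1))
    (hx : r.1 - p.1 = q.1 - r'.1 + ε) (hy : r.2 - p.2 = q.2 - r'.2 - ε) :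
    Metric.hausdorffDist (segment ℝ (toR2 p) (toR2 q))
      (segment ℝ (toR2 p) (toR2 r) ∪ segment ℝ (toR2 r) (toR2 r') ∪
        segment ℝ (toR2 r') (toR2 q)) ≤ Real.sqrt 5 / 2 := by
  subst hr'
  have hrx : 2 * r.1 - p.1 - q.1 = ε := by omega
  have hry : 2 * r.2 - p.2 - q.2 = -1 - ε := by omega
  have hr'y : 2 * (r.2 + 1) - p.2 - q.2 = 1 - ε := by omega
  apply hausdorffDist_segment_polyline_le_of_dist_midpoint_le
  · apply dist_toR2_midpoint_le
    rw [hrx, hry]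
    rcases hε with rfl | rfl | rfl <;> norm_num
  · apply dist_toR2_midpoint_le
    rw [hrx, hr'y]
    rcases hε with rfl | rfl | rfl <;> norm_num

theorem hausdorff_midpoint_split (p q r r' : ℤ × ℤ) (ε : ℤ)
    (hε : ε = -1 ∨ ε = 0 ∨ ε = 1)
    (h1 : p.1 ≤ r.1) (h2 : r.1 ≤ q.1) (h3 : p.2 ≤ r.2) (h4 : r.2 < q.2)
    (hr' : r' = (r.1, r.2 + 1))
    (hx : r.1 - p.1 = q.1 - r'.1 + ε) (hy : r.2 - p.2 = q.2 - r'.2 - ε) :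
    Metric.hausdorffDist (segment ℝ (toR2 p) (toR2 q))
      (segment ℝ (toR2 p) (toR2 r) ∪ segment ℝ (toR2 r) (toR2 r') ∪
        segment ℝ (toR2 r') (toR2 q)) ≤ Real.sqrt 5 / 2 :=
  hausdorff_midpoint_split_general p q r r' ε hε hr' hx hy
end

section
/- The relation ≺ on ℤ defined via 2-adic valuations is a strict total order: it is irreflexive, transitive, and for all a,b ∈ ℤ with a ≠ b, exactly one of a ≺ b or b ≺ a holds. -/
/-!
`a ≺ b` says that the sequence `(v₂(a - j))_{j ∈ ℕ}` is lexicographically smaller than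
`(v₂(b - j))_{j ∈ ℕ}`. The lexicographic order on `ℕ`-indexed sequences in a linear order is a
strict total order, so it remains to see that `a ↦ (v₂(a - j))_j` is injective.
-/

theorem pow_dvd_iff_le_v2 {n : ℕ} {k : ℤ} : (2 : ℤ) ^ n ∣ k ↔ (n : ℕ∞) ≤ v2 k := by
  rw [← Nat.cast_ofNat, padicValInt_dvd_iff, v2]
  by_cases hk : k = 0 <;> simp [hk]

noncomputable def v2Seq (a : ℤ) : ℕ → ℕ∞ := fun j => v2 (a - j)

theorem vorder_iff_toLex_lt {a b : ℤ} : vorder a b ↔ toLex (v2Seq a) < toLex (v2Seq b) :=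
  exists_congr fun _ => and_comm

/- If `v₂(a - j) = v₂(b - j)` for all `j`, take `j ≡ a` modulo a power `2 ^ N > |a - b|`:
then `2 ^ N` divides `a - j`, hence `b - j`, hence `a - b`, so `a = b`. -/
theorem v2Seq_injective : Function.Injective v2Seq := by
  intro a b h
  by_contra hab
  set N := (a - b).natAbs
  have hpos : (0 : ℤ) < 2 ^ N := by positivity
  set j := (a % 2 ^ N).toNat
  have hj : (j : ℤ) = a % 2 ^ N := Int.toNat_of_nonneg (Int.emod_nonneg _ hpos.ne')
  have ha : (2 : ℤ) ^ N ∣ a - j := hj ▸ Int.dvd_self_sub_of_emod_eq rfl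
  have hb : (2 : ℤ) ^ N ∣ b - j :=
    pow_dvd_iff_le_v2.2 ((pow_dvd_iff_le_v2.1 ha).trans_eq (congrFun h j))
  have hdiff : (2 : ℤ) ^ N ∣ a - b := by simpa using dvd_sub ha hb
  have hle : 2 ^ N ≤ N :=
    Nat.le_of_dvd (by omega) (by simpa using Int.natAbs_dvd_natAbs.2 hdiff)
  exact (Nat.lt_two_pow_self).not_ge hle

theorem vorder_isStrictTotalOrder :
    (∀ a : ℤ, ¬ vorder a a) ∧
    (∀ a b c : ℤ, vorder a b → vorder b c → vorder a c) ∧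
    (∀ a b : ℤ, a ≠ b → Xor' (vorder a b) (vorder b a)) := by
  simp only [vorder_iff_toLex_lt]
  refine ⟨fun a => lt_irrefl _, fun a b c => lt_trans, fun a b hab => ?_⟩
  have hne : toLex (v2Seq a) ≠ toLex (v2Seq b) := v2Seq_injective.ne hab
  rcases hne.lt_or_gt with h | h
  · exact Or.inl ⟨h, h.asymm⟩
  · exact Or.inr ⟨h, h.asymm⟩
end

section
/- Let k ≥ 0 and let A,B ∈ ℤ with B − A = 2^{k+1} − 1, and set M = (A+B−1)/2. Suppose v₂(M) ≥ k and v₂(x) < k for every x with A ≤ x < B and x ≠ M. Let x_1 ≺ x_2 ≺ … ≺ x_{2^{k+1}−1} be the elements of {x ∈ ℤ : A ≤ x < B} listed in increasing order with respect to ≺. Then for every index 1 ≤ i < 2^{k+1}−1: if x_i < M then x_{i+1} ≥ M, and if x_i > M then x_{i+1} ≤ M. -/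
open Set

/-!
Write `c = A - 1`, so that `2 ^ k ∣ c`, `M = c + 2 ^ k` and `B = c + 2 ^ k + 2 ^ k`. Translating
one argument of `≺` by a multiple of `2 ^ k` does not change the comparison when the two arguments
are incongruent mod `2 ^ k`, because at every index the smaller valuation is `< k` and is left
untouched. For `u` in the lower half `(c, M)` the valuations of `u - i` and `u + 2 ^ k - i` first
differ at `i = u - c`, where they are `v₂ c ≠ v₂ (c + 2 ^ k)`; so the direction of `u ≺ u + 2 ^ k`
is the same for the whole lower half. Hence for `x ≺ y` in the same half, the translate of `x` or
of `y` into the other half lies strictly between them, and `x, y` are not consecutive.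
-/

lemma v2_eq_emultiplicity (a : ℤ) : v2 a = emultiplicity 2 a := by
  unfold v2
  split_ifs with ha
  · simp [ha]
  · rw [padicValInt, padicValNat_eq_emultiplicity (Int.natAbs_ne_zero.mpr ha)]
    exact_mod_cast Int.emultiplicity_natAbs 2 a

lemma le_v2_iff_two_pow_dvd {a : ℤ} {n : ℕ} : (n : ℕ∞) ≤ v2 a ↔ 2 ^ n ∣ a := by
  rw [v2_eq_emultiplicity, pow_dvd_iff_le_emultiplicity]

lemma v2_lt_iff_not_two_pow_dvd {a : ℤ} {n : ℕ} : v2 a < n ↔ ¬ 2 ^ n ∣ a := by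
  rw [← le_v2_iff_two_pow_dvd, not_le]

lemma v2_add_of_lt {a b : ℤ} (h : v2 a < v2 b) : v2 (a + b) = v2 a := by
  rw [v2_eq_emultiplicity, v2_eq_emultiplicity] at h ⊢
  rw [add_comm]
  exact emultiplicity_add_of_gt h

lemma v2_add_of_not_two_pow_dvd {k : ℕ} {a d : ℤ} (hd : 2 ^ k ∣ d) (ha : ¬ 2 ^ k ∣ a) :
    v2 (a + d) = v2 a :=
  v2_add_of_lt ((v2_lt_iff_not_two_pow_dvd.2 ha).trans_le (le_v2_iff_two_pow_dvd.2 hd))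

lemma v2_ne_v2_add_two_pow {k : ℕ} {c : ℤ} (hc : 2 ^ k ∣ c) : v2 c ≠ v2 (c + 2 ^ k) := by
  intro heq
  obtain ⟨m, rfl⟩ := hc
  have h_one : 2 ^ (k + 1) ∣ 2 ^ k * m ∨ 2 ^ (k + 1) ∣ 2 ^ k * m + 2 ^ k := by
    rcases Int.even_or_odd' m with ⟨r, rfl | rfl⟩
    · exact .inl ⟨r, by ring⟩
    · exact .inr ⟨r + 1, by ring⟩
  have h_both : 2 ^ (k + 1) ∣ 2 ^ k * m ∧ 2 ^ (k + 1) ∣ 2 ^ k * m + 2 ^ k := by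
    simp only [← le_v2_iff_two_pow_dvd, heq] at h_one ⊢
    tauto
  have := Int.le_of_dvd (by positivity) ((Int.dvd_add_right h_both.1).mp h_both.2)
  rw [pow_succ] at this
  linarith [pow_pos (two_pos : (0 : ℤ) < 2) k]

lemma compare_v2_add_of_not_two_pow_dvd_sub {k : ℕ} {a b d : ℤ} (hd : 2 ^ k ∣ d)
    (hab : ¬ 2 ^ k ∣ b - a) : compare (v2 (a + d)) (v2 b) = compare (v2 a) (v2 b) := by
  by_cases ha : 2 ^ k ∣ a
  · have hb : v2 b < k := v2_lt_iff_not_two_pow_dvd.2 fun hb => hab (dvd_sub hb ha)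
    rw [compare_gt_iff_gt.2 (hb.trans_le (le_v2_iff_two_pow_dvd.2 ha)),
      compare_gt_iff_gt.2 (hb.trans_le (le_v2_iff_two_pow_dvd.2 (dvd_add ha hd)))]
  · rw [v2_add_of_not_two_pow_dvd hd ha]

lemma vorder_congr {a b a' b' : ℤ}
    (h : ∀ i : ℕ, compare (v2 (a - i)) (v2 (b - i)) = compare (v2 (a' - i)) (v2 (b' - i))) :
    vorder a b ↔ vorder a' b' := by
  simp only [vorder, ← compare_lt_iff_lt, ← compare_eq_iff_eq, h]

lemma vorder_add_left_iff {k : ℕ} {x y d : ℤ} (hd : 2 ^ k ∣ d) (h : ¬ 2 ^ k ∣ y - x) :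
    vorder (x + d) y ↔ vorder x y :=
  vorder_congr fun i => by
    rw [show x + d - i = x - i + d by ring]
    exact compare_v2_add_of_not_two_pow_dvd_sub hd (by rwa [sub_sub_sub_cancel_right])

lemma vorder_add_right_iff {k : ℕ} {x y d : ℤ} (hd : 2 ^ k ∣ d) (h : ¬ 2 ^ k ∣ y - x) :
    vorder x (y + d) ↔ vorder x y :=
  vorder_congr fun i => by
    rw [show y + d - i = y - i + d by ring, Std.OrientedOrd.eq_swap,
      compare_v2_add_of_not_two_pow_dvd_sub hd
        (by rwa [sub_sub_sub_cancel_right, dvd_sub_comm]), ← Std.OrientedOrd.eq_swap]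

lemma vorder_iff_of_eq_of_ne {a b : ℤ} {n : ℕ} (hagree : ∀ j < n, v2 (a - j) = v2 (b - j))
    (hne : v2 (a - n) ≠ v2 (b - n)) : vorder a b ↔ v2 (a - n) < v2 (b - n) := by
  refine ⟨fun ⟨i, hlt, heq⟩ => ?_, fun hlt => ⟨n, hlt, hagree⟩⟩
  rcases lt_trichotomy i n with hin | rfl | hni
  · exact absurd (hagree i hin) hlt.ne
  · exact hlt
  · exact absurd (heq n hni) hne

lemma vorder_asymm {a b : ℤ} (h : vorder a b) : ¬ vorder b a := by
  obtain ⟨i, hlt, heq⟩ := h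
  rw [vorder_iff_of_eq_of_ne (fun j hj => (heq j hj).symm) hlt.ne']
  exact hlt.not_gt

lemma not_two_pow_dvd_sub_of_vorder {k : ℕ} {a x y : ℤ} (hxy : vorder x y)
    (hx : x ∈ Ioo a (a + 2 ^ k)) (hy : y ∈ Ioo a (a + 2 ^ k)) : ¬ 2 ^ k ∣ y - x := fun hdvd => by
  have hlt : |y - x| < 2 ^ k :=
    abs_sub_lt_iff.2 ⟨by linarith [hx.1, hy.2], by linarith [hx.2, hy.1]⟩
  have : y = x := by linarith [Int.eq_zero_of_abs_lt_dvd hdvd hlt]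
  exact vorder_asymm hxy (this ▸ hxy)

lemma exists_vorder_between_of_dvd_sub {k : ℕ} {x y x' y' : ℤ} (hxy : vorder x y)
    (h : ¬ 2 ^ k ∣ y - x) (hx : 2 ^ k ∣ x' - x) (hy : 2 ^ k ∣ y' - y)
    (hdir : vorder x x' ∨ vorder y' y) : ∃ z, (z = x' ∨ z = y') ∧ vorder x z ∧ vorder z y := by
  rcases hdir with hxx' | hy'y
  · refine ⟨x', .inl rfl, hxx', ?_⟩
    rwa [← add_sub_cancel x x', vorder_add_left_iff hx h]
  · refine ⟨y', .inr rfl, ?_, hy'y⟩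
    rwa [← add_sub_cancel y y', vorder_add_right_iff hy h]

lemma exists_sub_eq_and_v2_add_two_pow_sub_eq {k : ℕ} {c u : ℤ} (hc : 2 ^ k ∣ c)
    (hu : u ∈ Ioo c (c + 2 ^ k)) :
    ∃ n : ℕ, u - n = c ∧ ∀ j < n, v2 (u + 2 ^ k - j) = v2 (u - j) := by
  obtain ⟨hcu, huc⟩ := hu
  refine ⟨(u - c).toNat, by omega, fun j hj => ?_⟩
  rw [show u + 2 ^ k - j = u - j + 2 ^ k by ring]
  refine v2_add_of_not_two_pow_dvd dvd_rfl fun hdvd => ?_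
  have := Int.eq_zero_of_abs_lt_dvd (dvd_sub hdvd hc) (by rw [abs_lt]; omega)
  omega

lemma vorder_self_add_two_pow_iff {k : ℕ} {c u : ℤ} (hc : 2 ^ k ∣ c)
    (hu : u ∈ Ioo c (c + 2 ^ k)) : vorder u (u + 2 ^ k) ↔ v2 c < v2 (c + 2 ^ k) := by
  obtain ⟨n, hn, hagree⟩ := exists_sub_eq_and_v2_add_two_pow_sub_eq hc hu
  have hn' : u + 2 ^ k - n = c + 2 ^ k := by omega
  have hne : v2 (u - n) ≠ v2 (u + 2 ^ k - n) := by
    rw [hn, hn']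
    exact v2_ne_v2_add_two_pow hc
  rw [vorder_iff_of_eq_of_ne (fun j hj => (hagree j hj).symm) hne, hn, hn']

lemma vorder_add_two_pow_self_iff {k : ℕ} {c u : ℤ} (hc : 2 ^ k ∣ c)
    (hu : u ∈ Ioo c (c + 2 ^ k)) : vorder (u + 2 ^ k) u ↔ v2 (c + 2 ^ k) < v2 c := by
  obtain ⟨n, hn, hagree⟩ := exists_sub_eq_and_v2_add_two_pow_sub_eq hc hu
  have hn' : u + 2 ^ k - n = c + 2 ^ k := by omega
  have hne : v2 (u + 2 ^ k - n) ≠ v2 (u - n) := by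
    rw [hn, hn']
    exact (v2_ne_v2_add_two_pow hc).symm
  rw [vorder_iff_of_eq_of_ne hagree hne, hn, hn']

lemma exists_vorder_between_of_mem_lower_half {k : ℕ} {c x y : ℤ} (hc : 2 ^ k ∣ c)
    (hx : x ∈ Ioo c (c + 2 ^ k)) (hy : y ∈ Ioo c (c + 2 ^ k)) (hxy : vorder x y) :
    ∃ z ∈ Ioo c (c + 2 ^ k + 2 ^ k), vorder x z ∧ vorder z y := by
  have hdir : vorder x (x + 2 ^ k) ∨ vorder (y + 2 ^ k) y := by
    rcases (v2_ne_v2_add_two_pow hc).lt_or_gt with hlt | hgt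
    · exact .inl ((vorder_self_add_two_pow_iff hc hx).2 hlt)
    · exact .inr ((vorder_add_two_pow_self_iff hc hy).2 hgt)
  obtain ⟨z, hz, hxz, hzy⟩ := exists_vorder_between_of_dvd_sub hxy
    (not_two_pow_dvd_sub_of_vorder hxy hx hy) (by simp) (by simp) hdir
  refine ⟨z, ?_, hxz, hzy⟩
  rcases hz with rfl | rfl <;> constructor <;> linarith [hx.1, hx.2, hy.1, hy.2]

lemma exists_vorder_between_of_mem_upper_half {k : ℕ} {c x y : ℤ} (hc : 2 ^ k ∣ c)
    (hx : x ∈ Ioo (c + 2 ^ k) (c + 2 ^ k + 2 ^ k))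
    (hy : y ∈ Ioo (c + 2 ^ k) (c + 2 ^ k + 2 ^ k)) (hxy : vorder x y) :
    ∃ z ∈ Ioo c (c + 2 ^ k + 2 ^ k), vorder x z ∧ vorder z y := by
  have hx' : x - 2 ^ k ∈ Ioo c (c + 2 ^ k) := ⟨by linarith [hx.1], by linarith [hx.2]⟩
  have hy' : y - 2 ^ k ∈ Ioo c (c + 2 ^ k) := ⟨by linarith [hy.1], by linarith [hy.2]⟩
  have hdir : vorder x (x - 2 ^ k) ∨ vorder (y - 2 ^ k) y := by
    rcases (v2_ne_v2_add_two_pow hc).lt_or_gt with hlt | hgt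
    · have := (vorder_self_add_two_pow_iff hc hy').2 hlt
      rw [sub_add_cancel] at this
      exact .inr this
    · have := (vorder_add_two_pow_self_iff hc hx').2 hgt
      rw [sub_add_cancel] at this
      exact .inl this
  obtain ⟨z, hz, hxz, hzy⟩ := exists_vorder_between_of_dvd_sub hxy
    (not_two_pow_dvd_sub_of_vorder hxy hx hy) (by simp) (by simp) hdir
  refine ⟨z, ?_, hxz, hzy⟩
  rcases hz with rfl | rfl <;> constructor <;> linarith [hx.1, hx.2, hy.1, hy.2]

lemma not_rel_between_succ {α : Type*} {r : α → α → Prop}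
    (hr : ∀ a b, r a b → ¬ r b a) {f : ℕ → α} {N : ℕ}
    (hmono : ∀ i j, i < j → j < N → r (f i) (f j)) {i l : ℕ} (hi : i + 1 < N) (hl : l < N) :
    ¬ (r (f i) (f l) ∧ r (f l) (f (i + 1))) := by
  rintro ⟨h₁, h₂⟩
  rcases Nat.lt_or_ge l (i + 1) with hli | hil
  · rcases (Nat.le_of_lt_succ hli).lt_or_eq with hli | rfl
    · exact hr _ _ (hmono l i hli (by omega)) h₁
    · exact hr _ _ h₁ h₁
  · rcases hil.lt_or_eq with hil | rfl
    · exact hr _ _ (hmono (i + 1) l hil hl) h₂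
    · exact hr _ _ h₂ h₂

theorem vorder_alternation_general (k : ℕ) (A B M : ℤ)
    (hBA : B - A = 2 ^ (k + 1) - 1) (hM : M = (A + B - 1) / 2)
    (hvM : (k : ℕ∞) ≤ v2 M)
    (f : ℕ → ℤ)
    (hmem : ∀ i : ℕ, i < 2 ^ (k + 1) - 1 → A ≤ f i ∧ f i < B)
    (hsurj : ∀ x : ℤ, A ≤ x → x < B → ∃ i : ℕ, i < 2 ^ (k + 1) - 1 ∧ f i = x)
    (hmono : ∀ i j : ℕ, i < j → j < 2 ^ (k + 1) - 1 → vorder (f i) (f j)) :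
    ∀ i : ℕ, i + 1 < 2 ^ (k + 1) - 1 →
      (f i < M → M ≤ f (i + 1)) ∧ (M < f i → f (i + 1) ≤ M) := by
  intro i hi
  have hMc : M = A - 1 + 2 ^ k := by omega
  have hB : B = A - 1 + 2 ^ k + 2 ^ k := by omega
  have hc : 2 ^ k ∣ A - 1 := dvd_add_self_right.1 (hMc ▸ le_v2_iff_two_pow_dvd.1 hvM)
  have hx := hmem i (by omega)
  have hy := hmem (i + 1) hi
  have hxy := hmono i (i + 1) (by omega) hi
  have no_between : ∀ z ∈ Ioo (A - 1) (A - 1 + 2 ^ k + 2 ^ k),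
      ¬ (vorder (f i) z ∧ vorder z (f (i + 1))) := fun z hz => by
    obtain ⟨l, hl, rfl⟩ := hsurj z (by linarith [hz.1]) (by linarith [hz.2])
    exact not_rel_between_succ (fun _ _ => vorder_asymm) hmono hi hl
  refine ⟨fun hxM => ?_, fun hxM => ?_⟩
  · by_contra! hyM
    obtain ⟨z, hz, hbetween⟩ := exists_vorder_between_of_mem_lower_half hc
      ⟨by omega, by omega⟩ ⟨by omega, by omega⟩ hxy
    exact no_between z hz hbetween
  · by_contra! hyM
    obtain ⟨z, hz, hbetween⟩ := exists_vorder_between_of_mem_upper_half hc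
      ⟨by omega, by omega⟩ ⟨by omega, by omega⟩ hxy
    exact no_between z hz hbetween

theorem vorder_alternation (k : ℕ) (A B M : ℤ)
    (hBA : B - A = 2 ^ (k + 1) - 1) (hM : M = (A + B - 1) / 2)
    (hvM : (k : ℕ∞) ≤ v2 M)
    (hvx : ∀ x : ℤ, A ≤ x → x < B → x ≠ M → v2 x < (k : ℕ∞))
    (f : ℕ → ℤ)
    (hmem : ∀ i : ℕ, i < 2 ^ (k + 1) - 1 → A ≤ f i ∧ f i < B)
    (hsurj : ∀ x : ℤ, A ≤ x → x < B → ∃ i : ℕ, i < 2 ^ (k + 1) - 1 ∧ f i = x)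
    (hmono : ∀ i j : ℕ, i < j → j < 2 ^ (k + 1) - 1 → vorder (f i) (f j)) :
    ∀ i : ℕ, i + 1 < 2 ^ (k + 1) - 1 →
      (f i < M → M ≤ f (i + 1)) ∧ (M < f i → f (i + 1) ≤ M) :=
  vorder_alternation_general k A B M hBA hM hvM f hmem hsurj hmono
end

section
/- Let d ≥ 1 and k ≥ 1, and let α = a_1 a_2 … a_k and β = b_1 b_2 … b_k be words over the alphabet {1,2,…,d} such that every letter occurs the same number of times in α and in β (i.e., for each l ∈ {1,…,d}, |{i : a_i = l}| = |{i : b_i = l}|), and suppose a_1 > b_1. Then there exists an index 1 < i ≤ k with a_i < a_1 and b_i > b_1. -/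
/-!
Fix `c = a₁`. Equal letter counts give equally many positions carrying a letter `< c` in `α` and
in `β`. If no index `i ≠ 1` had `aᵢ < c` and `bᵢ > b₁`, then every position with `aᵢ < c` would
have `bᵢ ≤ b₁`; position `1` has `b₁ ≤ b₁` but `a₁ = c`, so `β` would have strictly more positions
with a letter `≤ b₁ < c` than `α` has with a letter `< c`.
-/

section LetterCounts

variable {ι α : Type*} [Fintype ι] [DecidableEq α] {a b : ι → α}

open Finset

theorem map_univ_eq_of_card_filter_eq (h : ∀ l, #{i | a i = l} = #{i | b i = l}) :
    univ.val.map a = univ.val.map b :=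
  Multiset.ext.2 fun l => by
    simpa [Multiset.count_map, Finset.card, Finset.filter_val, eq_comm] using h l

theorem card_filter_comp_eq_of_card_filter_eq (h : ∀ l, #{i | a i = l} = #{i | b i = l})
    (p : α → Prop) [DecidablePred p] : #{i | p (a i)} = #{i | p (b i)} := by
  have := congrArg (fun m => Multiset.card (m.filter p)) (map_univ_eq_of_card_filter_eq h)
  simpa [Multiset.filter_map, Finset.card, Finset.filter_val] using this

end LetterCounts

open Finset in
theorem exists_ne_lt_lt_of_card_filter_eq {ι α : Type*} [Fintype ι] [LinearOrder α]
    {a b : ι → α} (h : ∀ l, #{i | a i = l} = #{i | b i = l}) {z : ι} (hz : b z < a z) :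
    ∃ i, i ≠ z ∧ a i < a z ∧ b z < b i := by
  by_contra! hcon
  have hsub : (univ.filter fun i => a i < a z) ⊂ univ.filter fun i => b i ≤ b z := by
    refine (ssubset_iff_of_subset fun i hi => ?_).2 ⟨z, by simp, by simp⟩
    simp only [mem_filter, mem_univ, true_and] at hi ⊢
    exact hcon i (by rintro rfl; exact lt_irrefl _ hi) hi
  have hle : (univ.filter fun i => b i ≤ b z) ⊆ univ.filter fun i => b i < a z :=
    monotone_filter_right _ fun i _ (hi : b i ≤ b z) => hi.trans_lt hz
  have := (card_lt_card hsub).trans_le (card_le_card hle)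
  rw [← card_filter_comp_eq_of_card_filter_eq h (· < a z)] at this
  exact lt_irrefl _ this

theorem word_letter_exchange_general (d k : ℕ) (hk : 0 < k)
    (a b : Fin k → Fin d)
    (hcount : ∀ l : Fin d,
      (Finset.univ.filter fun i => a i = l).card =
        (Finset.univ.filter fun i => b i = l).card)
    (h1 : b ⟨0, hk⟩ < a ⟨0, hk⟩) :
    ∃ i : Fin k, i ≠ ⟨0, hk⟩ ∧ a i < a ⟨0, hk⟩ ∧ b ⟨0, hk⟩ < b i :=
  exists_ne_lt_lt_of_card_filter_eq hcount h1

theorem word_letter_exchange (d k : ℕ) (hd : 1 ≤ d) (hk : 0 < k)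
    (a b : Fin k → Fin d)
    (hcount : ∀ l : Fin d,
      (Finset.univ.filter fun i => a i = l).card =
        (Finset.univ.filter fun i => b i = l).card)
    (h1 : b ⟨0, hk⟩ < a ⟨0, hk⟩) :
    ∃ i : Fin k, i ≠ ⟨0, hk⟩ ∧ a i < a ⟨0, hk⟩ ∧ b ⟨0, hk⟩ < b i :=
  word_letter_exchange_general d k hk a b hcount h1
end
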